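/- arXiv:2406.09723 — 2 statements merged into one kernel-verified Lean document; each statement's English description precedes it below -/
import Mathlib

section
/- Let $t \geq 2$ be an integer and define $F(x) = \frac{(1 + x^t)(1 - x)^2}{(1 + x)(1 - x^t)^2}$ for $x \in (0,1)$. If $t x^{t-1} \leq 1$ holds for all $x$ in an open subinterval $I \subseteq (0,1)$, then $F$ is strictly decreasing on $I$. -/
/-!
Writing `G y = (1 + y) / (1 - y)²`, the function is `F x = G (xᵗ) / G x`. The logarithmic
derivative of `G` is `H y = 1 / (1 + y) + 2 / (1 - y)`, so `F' = F · (t xᵗ⁻¹ H (xᵗ) - H x)`.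
On `(0, 1)` we have `xᵗ < x` and `H` is positive and strictly increasing on `[0, 1)`; hence
`t xᵗ⁻¹ H (xᵗ) ≤ H (xᵗ) < H x` wherever `t xᵗ⁻¹ ≤ 1`, and `F' < 0` there.
-/

open Set

namespace PowRatio

noncomputable def G (y : ℝ) : ℝ := (1 + y) / (1 - y) ^ 2

noncomputable def H (y : ℝ) : ℝ := 1 / (1 + y) + 2 / (1 - y)

lemma G_pos {y : ℝ} (hy : y ∈ Ioo (-1) 1) : 0 < G y := by
  have : 0 < 1 - y := by linarith [hy.2]
  unfold G
  exact div_pos (by linarith [hy.1]) (by positivity)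

lemma hasDerivAt_G {y : ℝ} (h₁ : 1 + y ≠ 0) (h₂ : 1 - y ≠ 0) : HasDerivAt G (G y * H y) y := by
  have hG := ((hasDerivAt_id' y).const_add 1).div (((hasDerivAt_id' y).const_sub 1).pow 2)
    (pow_ne_zero 2 h₂)
  refine hG.congr_deriv ?_
  simp only [G, H, Pi.pow_apply]
  field_simp
  ring

lemma H_pos {y : ℝ} (hy : y ∈ Ioo (-1) 1) : 0 < H y := by
  have : 0 < 1 + y := by linarith [hy.1]
  have : 0 < 1 - y := by linarith [hy.2]
  unfold H
  positivity

lemma H_eq_div {y : ℝ} (h₁ : 1 + y ≠ 0) (h₂ : 1 - y ≠ 0) :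
    H y = (3 + y) / ((1 + y) * (1 - y)) := by
  simp only [H]
  field_simp
  ring

lemma H_strictMonoOn : StrictMonoOn H (Ico 0 1) := by
  rintro u ⟨hu₀, hu₁⟩ x ⟨hx₀, hx₁⟩ hux
  rw [H_eq_div (by linarith) (by linarith), H_eq_div (by linarith) (by linarith),
    div_lt_div_iff₀ (by nlinarith) (by nlinarith)]
  -- the difference of the two sides is `(x - u) (1 + 3 (x + u) + x u)`
  nlinarith [mul_pos (sub_pos.2 hux) (by positivity : 0 < 1 + 3 * (x + u) + x * u)]

lemma eq_G_pow_div_G (t : ℕ) (x : ℝ) :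
    (1 + x ^ t) * (1 - x) ^ 2 / ((1 + x) * (1 - x ^ t) ^ 2) = G (x ^ t) / G x := by
  rw [G, G, div_div_div_eq, mul_comm ((1 - x ^ t) ^ 2)]

lemma pow_mem_Ioo_neg_one_one {t : ℕ} (ht : t ≠ 0) {x : ℝ} (hx : x ∈ Ioo (-1) 1) :
    x ^ t ∈ Ioo (-1) 1 := by
  have hx' : |x| < 1 := abs_lt.2 hx
  exact abs_lt.1 (by simpa only [abs_pow] using pow_lt_one₀ (abs_nonneg x) hx' ht)

lemma hasDerivAt_G_pow_div_G {t : ℕ} (ht : t ≠ 0) {x : ℝ} (hx : x ∈ Ioo (-1) 1) :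
    HasDerivAt (fun x ↦ G (x ^ t) / G x)
      (G (x ^ t) / G x * (t * x ^ (t - 1) * H (x ^ t) - H x)) x := by
  have hxt := pow_mem_Ioo_neg_one_one ht hx
  have hGx := hasDerivAt_G (y := x) (by linarith [hx.1]) (by linarith [hx.2])
  have hGxt : HasDerivAt (fun x ↦ G (x ^ t)) (G (x ^ t) * H (x ^ t) * (t * x ^ (t - 1))) x :=
    (hasDerivAt_G (by linarith [hxt.1]) (by linarith [hxt.2])).comp x (hasDerivAt_pow t x)
  refine (hGxt.div hGx (G_pos hx).ne').congr_deriv ?_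
  field_simp

lemma mul_H_pow_lt_H {t : ℕ} (ht : 2 ≤ t) {x : ℝ} (hx : x ∈ Ioo 0 1)
    (hs : t * x ^ (t - 1) ≤ 1) : t * x ^ (t - 1) * H (x ^ t) < H x := by
  have hxt₀ : 0 < x ^ t := pow_pos hx.1 t
  have hxt : x ^ t < x := pow_lt_self_of_lt_one₀ hx.1 hx.2 (by omega)
  calc t * x ^ (t - 1) * H (x ^ t)
      ≤ H (x ^ t) := mul_le_of_le_one_left (H_pos ⟨by linarith, by linarith [hx.2]⟩).le hs
    _ < H x := H_strictMonoOn ⟨hxt₀.le, by linarith [hx.2]⟩ ⟨hx.1.le, hx.2⟩ hxt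

end PowRatio

open PowRatio

/-- On any open subinterval of `(0,1)` where `t x^(t-1) ≤ 1`, the function
`F(x) = (1+xᵗ)(1-x)² / ((1+x)(1-xᵗ)²)` is strictly decreasing. -/
theorem F_strictAntiOn (t : ℕ) (ht : 2 ≤ t) (a b : ℝ)
    (hI : Set.Ioo a b ⊆ Set.Ioo (0 : ℝ) 1)
    (hcond : ∀ x ∈ Set.Ioo a b, (t : ℝ) * x ^ (t - 1) ≤ 1) :
    StrictAntiOn (fun x : ℝ => (1 + x ^ t) * (1 - x) ^ 2 / ((1 + x) * (1 - x ^ t) ^ 2))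
      (Set.Ioo a b) := by
  have ht₀ : t ≠ 0 := by omega
  have hmem : ∀ x ∈ Ioo a b, x ∈ Ioo (-1) 1 := fun x hx ↦
    Ioo_subset_Ioo_left (by norm_num) (hI hx)
  have hderiv : ∀ x ∈ Ioo a b, _ := fun x hx ↦ hasDerivAt_G_pow_div_G ht₀ (hmem x hx)
  simp only [eq_G_pow_div_G]
  refine strictAntiOn_of_deriv_neg (convex_Ioo a b)
    (fun x hx ↦ (hderiv x hx).continuousAt.continuousWithinAt) fun x hx ↦ ?_
  rw [interior_Ioo] at hx
  rw [(hderiv x hx).deriv]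
  have hF : 0 < G (x ^ t) / G x :=
    div_pos (G_pos (pow_mem_Ioo_neg_one_one ht₀ (hmem x hx))) (G_pos (hmem x hx))
  exact mul_neg_of_pos_of_neg hF (sub_neg.2 (mul_H_pow_lt_H ht (hI hx) (hcond x hx)))
end

section
/- Fix an integer $t \geq 2$, $\sigma_1 > 0$, and define $V(\gamma) = \frac{t}{2\sigma_1}\cdot\frac{(1 + e^{-\gamma t})(1 - e^{-\gamma})^2}{(1 + e^{-\gamma})(1 - e^{-\gamma t})^2}$ for $\gamma > 0$. If $t e^{-\gamma(t-1)} \leq 1$ for all $\gamma$ in an interval $(\gamma_0, \gamma_1)$ with $0 < \gamma_0 < \gamma_1$, then $V$ is strictly increasing on $(\gamma_0, \gamma_1)$. -/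
/-!
With `x = e^{-γ}` (decreasing in `γ`) the claim is that
`f(x) = (1 + x^t)(1 - x)² / ((1 + x)(1 - x^t)²)` is strictly decreasing wherever `t x^{t-1} ≤ 1`.
Writing `y = x^t` and `u = t x^{t-1}`, the numerator of `f'` factors as
`-(1 - x)(1 - y)((1 - y²)(3 + x) - u(1 - x²)(3 + y))`, and the last factor is positive because
`0 < y < x < 1` for `t ≥ 2` and `u ≤ 1`.
-/

open Real Set

noncomputable def varianceRatio (t : ℕ) (x : ℝ) : ℝ :=
  (1 + x ^ t) * (1 - x) ^ 2 / ((1 + x) * (1 - x ^ t) ^ 2)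

lemma mul_one_sub_sq_mul_lt {x y u : ℝ} (hy : 0 ≤ y) (hyx : y < x) (hx : x < 1)
    (hu : u ≤ 1) :
    u * (1 - x ^ 2) * (3 + y) < (1 - y ^ 2) * (3 + x) :=
  calc u * (1 - x ^ 2) * (3 + y) ≤ (1 - x ^ 2) * (3 + y) := by
        have : 0 ≤ (1 - x ^ 2) * (3 + y) := mul_nonneg (by nlinarith) (by linarith)
        nlinarith
    _ < (1 - y ^ 2) * (3 + x) := by
        gcongr ?_ * ?_
        · nlinarith
        · nlinarith
        · linarith

lemma hasDerivAt_varianceRatio (t : ℕ) {x : ℝ} (hD : (1 + x) * (1 - x ^ t) ^ 2 ≠ 0) :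
    HasDerivAt (varianceRatio t)
      (-((1 - x) * (1 - x ^ t) *
          ((1 - (x ^ t) ^ 2) * (3 + x) - t * x ^ (t - 1) * (1 - x ^ 2) * (3 + x ^ t))) /
        ((1 + x) * (1 - x ^ t) ^ 2) ^ 2) x := by
  have hpow := hasDerivAt_pow t x
  have hN := (hpow.const_add 1).fun_mul (((hasDerivAt_id' x).const_sub 1).fun_pow 2)
  have hDen := ((hasDerivAt_id' x).const_add 1).fun_mul ((hpow.const_sub 1).fun_pow 2)
  refine (hN.div hDen hD).congr_deriv ?_
  congr 1
  norm_num
  ring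

lemma strictAntiOn_varianceRatio {t : ℕ} (ht : 2 ≤ t) {s : Set ℝ} (hs : Convex ℝ s)
    (hs01 : s ⊆ Ioo 0 1) (hslope : ∀ x ∈ s, t * x ^ (t - 1) ≤ 1) :
    StrictAntiOn (varianceRatio t) s := by
  have hderiv : ∀ x ∈ s, ∃ d, HasDerivAt (varianceRatio t) d x ∧ d < 0 := fun x hx ↦ by
    obtain ⟨hx₀, hx₁⟩ := hs01 hx
    have hy₀ : 0 ≤ x ^ t := by positivity
    have hyx : x ^ t < x := pow_lt_self_of_lt_one₀ hx₀ hx₁ ht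
    have hD : 0 < (1 + x) * (1 - x ^ t) ^ 2 := by
      have : 0 < 1 - x ^ t := by linarith
      positivity
    refine ⟨_, hasDerivAt_varianceRatio t hD.ne', div_neg_of_neg_of_pos ?_ (by positivity)⟩
    have hfactor := mul_one_sub_sq_mul_lt hy₀ hyx hx₁ (hslope x hx)
    have hpos : 0 < (1 - x) * (1 - x ^ t) := mul_pos (by linarith) (by linarith)
    nlinarith
  exact strictAntiOn_of_deriv_neg hs
    (fun x hx ↦ (hderiv x hx).choose_spec.1.continuousAt.continuousWithinAt)
    (fun x hx ↦ by
      obtain ⟨d, hf, hneg⟩ := hderiv x (interior_subset hx)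
      rwa [hf.deriv])

lemma exp_neg_mul_natCast (γ : ℝ) (n : ℕ) : exp (-γ * n) = exp (-γ) ^ n := by
  rw [← exp_nat_mul, mul_comm]

theorem V_strictMonoOn_general (t : ℕ) (ht : 2 ≤ t) (σ₁ : ℝ) (hσ : 0 < σ₁)
    (γ₀ γ₁ : ℝ) (h₀ : 0 < γ₀)
    (hcond : ∀ γ ∈ Set.Ioo γ₀ γ₁, (t : ℝ) * Real.exp (-γ * (t - 1)) ≤ 1) :
    StrictMonoOn (fun γ : ℝ =>
        (t : ℝ) / (2 * σ₁) *
          ((1 + Real.exp (-γ * t)) * (1 - Real.exp (-γ)) ^ 2 /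
            ((1 + Real.exp (-γ)) * (1 - Real.exp (-γ * t)) ^ 2)))
      (Set.Ioo γ₀ γ₁) := by
  have hmaps : MapsTo (fun γ ↦ exp (-γ)) (Ioo γ₀ γ₁) (Ioo (exp (-γ₁)) (exp (-γ₀))) :=
    fun γ hγ ↦ ⟨exp_lt_exp.2 (neg_lt_neg hγ.2), exp_lt_exp.2 (neg_lt_neg hγ.1)⟩
  have hs01 : Ioo (exp (-γ₁)) (exp (-γ₀)) ⊆ Ioo 0 1 := fun x hx ↦
    ⟨(exp_pos _).trans hx.1, hx.2.trans (exp_lt_one_iff.2 (neg_lt_zero.2 h₀))⟩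
  have hslope : ∀ x ∈ Ioo (exp (-γ₁)) (exp (-γ₀)), t * x ^ (t - 1) ≤ 1 := by
    intro x hx
    have hx₀ : 0 < x := (hs01 hx).1
    have hγ : -log x ∈ Ioo γ₀ γ₁ :=
      ⟨lt_neg.2 ((log_lt_iff_lt_exp hx₀).2 hx.2), neg_lt.2 ((lt_log_iff_exp_lt hx₀).2 hx.1)⟩
    have hcondx := hcond _ hγ
    rwa [← Nat.cast_pred (by omega), exp_neg_mul_natCast, neg_neg, exp_log hx₀] at hcondx
  have hanti : StrictAntiOn (fun γ ↦ exp (-γ)) (Ioo γ₀ γ₁) :=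
    fun a _ b _ hab ↦ exp_lt_exp.2 (neg_lt_neg hab)
  have hratio := (strictAntiOn_varianceRatio ht (convex_Ioo _ _) hs01 hslope).comp hanti hmaps
  intro a ha b hb hab
  simp only [exp_neg_mul_natCast]
  exact mul_lt_mul_of_pos_left (hratio ha hb hab) (by positivity)

/-- The adaptive learning rate variance
`V(γ) = t/(2σ₁) · (1+e^{-γt})(1-e^{-γ})² / ((1+e^{-γ})(1-e^{-γt})²)`
is strictly increasing on any interval `(γ₀, γ₁) ⊆ (0,∞)` on which `t e^{-γ(t-1)} ≤ 1`. -/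
theorem V_strictMonoOn (t : ℕ) (ht : 2 ≤ t) (σ₁ : ℝ) (hσ : 0 < σ₁)
    (γ₀ γ₁ : ℝ) (h₀ : 0 < γ₀) (h₀₁ : γ₀ < γ₁)
    (hcond : ∀ γ ∈ Set.Ioo γ₀ γ₁, (t : ℝ) * Real.exp (-γ * (t - 1)) ≤ 1) :
    StrictMonoOn (fun γ : ℝ =>
        (t : ℝ) / (2 * σ₁) *
          ((1 + Real.exp (-γ * t)) * (1 - Real.exp (-γ)) ^ 2 /
            ((1 + Real.exp (-γ)) * (1 - Real.exp (-γ * t)) ^ 2)))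
      (Set.Ioo γ₀ γ₁) :=
  V_strictMonoOn_general t ht σ₁ hσ γ₀ γ₁ h₀ hcond
end
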